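/- Let {F_n}_{n≥1} be a sequence of d×d real matrices all of whose entries are ≥ 1, and suppose there is a constant C > 0 such that ‖F_n‖₁ ≤ C·n for all sufficiently large n, where ‖F‖₁ = ∑_{i,j} |f_{ij}| is the entrywise 1-norm. Then τ(F_n F_{n-1} ⋯ F_m) → 0 as n → ∞, for every m ≥ 1. -/

import Mathlib

/-!
A matrix with entries in `[1, N]` has all cross-ratios `A i j * A i' j' / (A i j' * A i' j)` at
most `N²`, and Birkhoff's estimate then says that it contracts the Hilbert metric by the factor
`(N - 1) / (N + 1)`: writing `x = α • u + β • w`, `y = u + w` with `α ≤ x / y ≤ β`, the ratios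
`(A *ᵥ x) / (A *ᵥ y)` at two rows are compared through the cross-ratio bound, and the worst
case is a one-variable inequality. Hence `τ(F_n ⋯ F_m) ≤ ∏_{k=m}^{n} (1 - 2 / (‖F_k‖₁ + 1))`,
and since `‖F_k‖₁ ≤ C k` the series `∑ 1 / (‖F_k‖₁ + 1)` diverges like the harmonic series,
so the product tends to `0`.
-/

open Filter

/-- The Hilbert projective metric on strictly positive vectors in `ℝ^d`. -/
noncomputable def hilbertDist {d : ℕ} (x y : Fin d → ℝ) : ℝ :=
  Real.log (⨆ i : Fin d, ⨆ j : Fin d, (x i * y j) / (x j * y i))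

/-- The Birkhoff contraction coefficient. -/
noncomputable def birkhoffCoeff {d : ℕ} (A : Matrix (Fin d) (Fin d) ℝ) : ℝ :=
  sSup {t : ℝ | ∃ x y : Fin d → ℝ, (∀ i, 0 < x i) ∧ (∀ i, 0 < y i) ∧
    0 < hilbertDist x y ∧ t = hilbertDist (A.mulVec x) (A.mulVec y) / hilbertDist x y}

/-- The backward (decreasing-index) product `F_n F_{n-1} ⋯ F_m`. -/
def revProd {d : ℕ} (F : ℕ → Matrix (Fin d) (Fin d) ℝ) (m n : ℕ) :
    Matrix (Fin d) (Fin d) ℝ :=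
  (((List.range' m (n + 1 - m)).map F).reverse).prod

/-- The entrywise 1-norm `‖F‖₁ = ∑_{i,j} |f_{ij}|`. -/
def norm1 {d : ℕ} (F : Matrix (Fin d) (Fin d) ℝ) : ℝ :=
  ∑ i, ∑ j, |F i j|

open Finset Matrix Topology

section Scalar

theorem mul_add_one_le_rpow_mul_add {k ρ : ℝ} (hk : 1 ≤ k) (hρ : 1 ≤ ρ) :
    k * ρ + 1 ≤ ρ ^ ((k - 1) / (k + 1)) * (k + ρ) := by
  set c := (k - 1) / (k + 1) with hc
  -- the claim is `g (log ρ) ≥ g 0 = 0` for the monotone function `g` below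
  set g : ℝ → ℝ := fun s => c * s + Real.log (k + Real.exp s) - Real.log (k * Real.exp s + 1)
  have hderiv : ∀ s, HasDerivAt g
      (c + Real.exp s / (k + Real.exp s) - k * Real.exp s / (k * Real.exp s + 1)) s := fun s =>
    (((hasDerivAt_id s).const_mul c).congr_deriv (mul_one c)).add
      (((Real.hasDerivAt_exp s).const_add k).log (by positivity)) |>.sub
      ((((Real.hasDerivAt_exp s).const_mul k).add_const 1).log (by positivity))
  have hderiv_nonneg : ∀ s,
      0 ≤ c + Real.exp s / (k + Real.exp s) - k * Real.exp s / (k * Real.exp s + 1) := by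
    intro s
    have hu := Real.exp_pos s
    have key : c + Real.exp s / (k + Real.exp s) - k * Real.exp s / (k * Real.exp s + 1)
        = (k - 1) * k * (Real.exp s - 1) ^ 2
          / ((k + 1) * ((k + Real.exp s) * (k * Real.exp s + 1))) := by
      rw [hc]
      field_simp
      ring
    rw [key]
    have : 0 ≤ k - 1 := by linarith
    positivity
  have hmono : Monotone g := monotone_of_deriv_nonneg (fun s => (hderiv s).differentiableAt)
    fun s => (hderiv s).deriv ▸ hderiv_nonneg s
  have hρ0 : 0 < ρ := by linarith
  have hlog : Real.log (k * ρ + 1) ≤ Real.log (ρ ^ c * (k + ρ)) := by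
    have := hmono (Real.log_nonneg hρ)
    simp only [g, Real.exp_zero, Real.exp_log hρ0, mul_zero, zero_add, mul_one, sub_self] at this
    rw [Real.log_mul (by positivity) (by positivity), Real.log_rpow hρ0]
    linarith
  exact (Real.log_le_log_iff (by positivity) (by positivity)).1 hlog

/-- `(p² a + q² b) / (a + b)` is the ratio `(A *ᵥ x) / (A *ᵥ y)` at a row where
`(A *ᵥ u, A *ᵥ w) = (a, b)`, for `x = p² • u + q² • w` and `y = u + w`. -/
theorem two_point_le {p q k M a b a' b' : ℝ} (hp : 0 < p) (hpq : p ≤ q) (hk : 1 ≤ k)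
    (hM : (k * q + p) ^ 2 ≤ M * (k * p + q) ^ 2) (ha : 0 ≤ a) (hb : 0 ≤ b) (ha' : 0 ≤ a')
    (hb' : 0 ≤ b') (hab' : 0 < a' + b') (hcross : b * a' ≤ k ^ 2 * (a * b')) :
    (p ^ 2 * a + q ^ 2 * b) * (a' + b') ≤ M * ((p ^ 2 * a' + q ^ 2 * b') * (a + b)) := by
  have hq2 : p ^ 2 ≤ q ^ 2 := pow_le_pow_left₀ hp.le hpq 2
  have hk2 : 1 ≤ k ^ 2 := one_le_pow₀ hk
  -- `t ↦ (p² + q² t) / (1 + t)` is increasing, so we may replace `(a, b)` by `(a', k² b')`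
  have hmono : (p ^ 2 * a + q ^ 2 * b) * (a' + k ^ 2 * b')
      ≤ (p ^ 2 * a' + q ^ 2 * (k ^ 2 * b')) * (a + b) := by
    nlinarith [mul_le_mul_of_nonneg_left hcross (sub_nonneg.2 hq2)]
  -- the extremal case, where the defect is `(q² - p²)(k² - 1)(k q b' - p a')²`
  have hext : (p ^ 2 * a' + q ^ 2 * (k ^ 2 * b')) * (a' + b') * (k * p + q) ^ 2
      ≤ (k * q + p) ^ 2 * ((p ^ 2 * a' + q ^ 2 * b') * (a' + k ^ 2 * b')) := by
    nlinarith [mul_nonneg (mul_nonneg (sub_nonneg.2 hq2) (sub_nonneg.2 hk2))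
      (sq_nonneg (k * q * b' - p * a'))]
  have hden : 0 < (a' + k ^ 2 * b') * (k * p + q) ^ 2 := by
    have : 0 < a' + k ^ 2 * b' := by nlinarith
    have : 0 < k * p + q := by nlinarith
    positivity
  refine le_of_mul_le_mul_right ?_ hden
  calc (p ^ 2 * a + q ^ 2 * b) * (a' + b') * ((a' + k ^ 2 * b') * (k * p + q) ^ 2)
      ≤ (p ^ 2 * a' + q ^ 2 * (k ^ 2 * b')) * (a' + b') * (k * p + q) ^ 2 * (a + b) := by
        nlinarith [mul_le_mul_of_nonneg_right hmono
          (mul_nonneg hab'.le (sq_nonneg (k * p + q)))]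
    _ ≤ (k * q + p) ^ 2 * ((p ^ 2 * a' + q ^ 2 * b') * (a' + k ^ 2 * b')) * (a + b) :=
        mul_le_mul_of_nonneg_right hext (by positivity)
    _ ≤ M * (k * p + q) ^ 2 * ((p ^ 2 * a' + q ^ 2 * b') * (a' + k ^ 2 * b')) * (a + b) := by
        gcongr
    _ = M * ((p ^ 2 * a' + q ^ 2 * b') * (a + b)) * ((a' + k ^ 2 * b') * (k * p + q) ^ 2) := by
        ring

theorem mul_sqrt_add_sqrt_sq_le {k α β : ℝ} (hk : 1 ≤ k) (hα : 0 < α) (hαβ : α ≤ β) :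
    (k * √β + √α) ^ 2 ≤ (β / α) ^ ((k - 1) / (k + 1)) * (k * √α + √β) ^ 2 := by
  set c := (k - 1) / (k + 1)
  have hsα : 0 < √α := Real.sqrt_pos.2 hα
  have hρ : 1 ≤ √β / √α := (one_le_div hsα).2 (Real.sqrt_le_sqrt hαβ)
  have hlin : k * √β + √α ≤ (√β / √α) ^ c * (k * √α + √β) := by
    have := mul_le_mul_of_nonneg_right (mul_add_one_le_rpow_mul_add hk hρ) hsα.le
    calc k * √β + √α = (k * (√β / √α) + 1) * √α := by field_simp
      _ ≤ (√β / √α) ^ c * (k + √β / √α) * √α := this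
      _ = (√β / √α) ^ c * (k * √α + √β) := by field_simp
  have hpow : ((√β / √α) ^ c) ^ 2 = (β / α) ^ c := by
    rw [← Real.rpow_mul_natCast (by positivity), mul_comm, Real.rpow_natCast_mul (by positivity),
      div_pow, Real.sq_sqrt hα.le, Real.sq_sqrt (hα.le.trans hαβ)]
  rw [← hpow, ← mul_pow]
  exact pow_le_pow_left₀ (by positivity) hlin 2

end Scalar

section MulVec

variable {m n : Type*} [Fintype n]

theorem mulVec_pos [Nonempty n] {A : Matrix m n ℝ} (hA : ∀ i j, 0 < A i j) {x : n → ℝ}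
    (hx : ∀ j, 0 < x j) (i : m) : 0 < (A *ᵥ x) i :=
  sum_pos (fun j _ => mul_pos (hA i j) (hx j)) univ_nonempty

theorem mulVec_nonneg {A : Matrix m n ℝ} (hA : ∀ i j, 0 ≤ A i j) {x : n → ℝ}
    (hx : ∀ j, 0 ≤ x j) (i : m) : 0 ≤ (A *ᵥ x) i :=
  sum_nonneg fun j _ => mul_nonneg (hA i j) (hx j)

theorem mulVec_mul_mulVec_le {A : Matrix m n ℝ} {K : ℝ} {i i' : m}
    (hA : ∀ j j', A i j * A i' j' ≤ K * (A i j' * A i' j)) {u w : n → ℝ} (hu : ∀ j, 0 ≤ u j)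
    (hw : ∀ j, 0 ≤ w j) : (A *ᵥ w) i * (A *ᵥ u) i' ≤ K * ((A *ᵥ u) i * (A *ᵥ w) i') := by
  calc (A *ᵥ w) i * (A *ᵥ u) i' = ∑ j, ∑ j', A i j * w j * (A i' j' * u j') :=
        sum_mul_sum _ _ _ _
    _ ≤ ∑ j, ∑ j', K * (A i j' * u j' * (A i' j * w j)) := by
        refine sum_le_sum fun j _ => sum_le_sum fun j' _ => ?_
        calc A i j * w j * (A i' j' * u j') = (A i j * A i' j') * (w j * u j') := by ring
          _ ≤ K * (A i j' * A i' j) * (w j * u j') :=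
              mul_le_mul_of_nonneg_right (hA j j') (mul_nonneg (hw j) (hu j'))
          _ = K * (A i j' * u j' * (A i' j * w j)) := by ring
    _ = K * ((A *ᵥ u) i * (A *ᵥ w) i') := by
        simp only [mulVec, dotProduct]
        rw [sum_mul_sum, mul_sum]
        simp only [mul_sum]
        exact sum_comm

theorem mulVec_mul_mulVec_le_rpow [Nonempty n] {A : Matrix m n ℝ} {k α β : ℝ} (hk : 1 ≤ k)
    (hA : ∀ i j, 0 < A i j) (hcross : ∀ i i' j j', A i j * A i' j' ≤ k ^ 2 * (A i j' * A i' j))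
    {x y : n → ℝ} (hy : ∀ j, 0 < y j) (hα : 0 < α) (hαx : ∀ j, α * y j ≤ x j)
    (hxβ : ∀ j, x j ≤ β * y j) (i i' : m) :
    (A *ᵥ x) i * (A *ᵥ y) i' ≤ (β / α) ^ ((k - 1) / (k + 1)) * ((A *ᵥ x) i' * (A *ᵥ y) i) := by
  obtain ⟨j⟩ := ‹Nonempty n›
  have hαβ : α ≤ β := le_of_mul_le_mul_right ((hαx j).trans (hxβ j)) (hy j)
  rcases hαβ.eq_or_lt with rfl | hlt
  · have hx : x = α • y := funext fun j => le_antisymm (hxβ j) (hαx j)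
    simp only [hx, mulVec_smul, Pi.smul_apply, smul_eq_mul, div_self hα.ne', Real.one_rpow]
    linarith
  · -- `(β - α) • x = α • u + β • w` and `(β - α) • y = u + w`
    set u := β • y - x
    set w := x - α • y
    have hAu : A *ᵥ u = β • (A *ᵥ y) - A *ᵥ x := by simp only [u, mulVec_sub, mulVec_smul]
    have hAw : A *ᵥ w = A *ᵥ x - α • (A *ᵥ y) := by simp only [w, mulVec_sub, mulVec_smul]
    have hA0 : ∀ i j, 0 ≤ A i j := fun i j => (hA i j).le
    have hu0 : ∀ j, 0 ≤ u j := fun j => by simp [u, hxβ j]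
    have hw0 : ∀ j, 0 ≤ w j := fun j => by simp [w, hαx j]
    have hpos : 0 < (A *ᵥ u) i' + (A *ᵥ w) i' := by
      simp only [hAu, hAw, Pi.sub_apply, Pi.smul_apply, smul_eq_mul]
      nlinarith [mulVec_pos hA hy i']
    have key := two_point_le (Real.sqrt_pos.2 hα) (Real.sqrt_le_sqrt hlt.le) hk
      (mul_sqrt_add_sqrt_sq_le hk hα hlt.le) (mulVec_nonneg hA0 hu0 i) (mulVec_nonneg hA0 hw0 i)
      (mulVec_nonneg hA0 hu0 i') (mulVec_nonneg hA0 hw0 i') hpos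
      (mulVec_mul_mulVec_le (hcross i i') hu0 hw0)
    simp only [hAu, hAw, Pi.sub_apply, Pi.smul_apply, smul_eq_mul, Real.sq_sqrt hα.le,
      Real.sq_sqrt (hα.le.trans hlt.le)] at key
    refine le_of_mul_le_mul_left ?_ (pow_pos (sub_pos.2 hlt) 2)
    linear_combination key

end MulVec

section HilbertMetric

variable {d : ℕ}

theorem div_le_iSup_iSup (x y : Fin d → ℝ) (i j : Fin d) :
    x i * y j / (x j * y i) ≤ ⨆ i, ⨆ j, x i * y j / (x j * y i) :=
  le_ciSup_of_le (Finite.bddAbove_range _) i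
    (le_ciSup (f := fun j => x i * y j / (x j * y i)) (Finite.bddAbove_range _) j)

variable {x y : Fin d → ℝ}

theorem log_div_le_hilbertDist (hx : ∀ i, 0 < x i) (hy : ∀ i, 0 < y i) (i j : Fin d) :
    Real.log (x i * y j / (x j * y i)) ≤ hilbertDist x y :=
  Real.log_le_log (div_pos (mul_pos (hx i) (hy j)) (mul_pos (hx j) (hy i)))
    (div_le_iSup_iSup x y i j)

theorem hilbertDist_nonneg [Nonempty (Fin d)] (hx : ∀ i, 0 < x i) (hy : ∀ i, 0 < y i) :
    0 ≤ hilbertDist x y := by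
  obtain ⟨i⟩ := ‹Nonempty (Fin d)›
  simpa [div_self (mul_pos (hx i) (hy i)).ne'] using log_div_le_hilbertDist hx hy i i

theorem hilbertDist_le_log [Nonempty (Fin d)] {M : ℝ} (hx : ∀ i, 0 < x i) (hy : ∀ i, 0 < y i)
    (h : ∀ i j, x i * y j ≤ M * (x j * y i)) : hilbertDist x y ≤ Real.log M := by
  obtain ⟨i⟩ := ‹Nonempty (Fin d)›
  refine Real.log_le_log ((div_pos (mul_pos (hx i) (hy i)) (mul_pos (hx i) (hy i))).trans_le
    (div_le_iSup_iSup x y i i)) (ciSup_le fun i => ciSup_le fun j => ?_)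
  exact (div_le_iff₀ (mul_pos (hx j) (hy i))).2 (h i j)

theorem hilbertDist_mulVec_le_of_bounds [Nonempty (Fin d)] {A : Matrix (Fin d) (Fin d) ℝ}
    {k α β : ℝ} (hk : 1 ≤ k) (hA : ∀ i j, 0 < A i j)
    (hcross : ∀ i i' j j', A i j * A i' j' ≤ k ^ 2 * (A i j' * A i' j))
    (hy : ∀ i, 0 < y i) (hα : 0 < α) (hαx : ∀ i, α * y i ≤ x i) (hxβ : ∀ i, x i ≤ β * y i) :
    hilbertDist (A *ᵥ x) (A *ᵥ y) ≤ (k - 1) / (k + 1) * Real.log (β / α) := by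
  have hx : ∀ i, 0 < x i := fun i => (mul_pos hα (hy i)).trans_le (hαx i)
  obtain ⟨i⟩ := ‹Nonempty (Fin d)›
  have hβα : 0 < β / α :=
    div_pos (pos_of_mul_pos_left ((hx i).trans_le (hxβ i)) (hy i).le) hα
  rw [← Real.log_rpow hβα]
  exact hilbertDist_le_log (mulVec_pos hA hx) (mulVec_pos hA hy)
    (mulVec_mul_mulVec_le_rpow hk hA hcross hy hα hαx hxβ)

theorem hilbertDist_mulVec_le [Nonempty (Fin d)] {A : Matrix (Fin d) (Fin d) ℝ} {k : ℝ}
    (hk : 1 ≤ k) (hA : ∀ i j, 0 < A i j)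
    (hcross : ∀ i i' j j', A i j * A i' j' ≤ k ^ 2 * (A i j' * A i' j))
    (hx : ∀ i, 0 < x i) (hy : ∀ i, 0 < y i) :
    hilbertDist (A *ᵥ x) (A *ᵥ y) ≤ (k - 1) / (k + 1) * hilbertDist x y := by
  obtain ⟨i₀, hmax⟩ := Finite.exists_max fun i => x i / y i
  obtain ⟨j₀, hmin⟩ := Finite.exists_min fun i => x i / y i
  calc hilbertDist (A *ᵥ x) (A *ᵥ y)
      ≤ (k - 1) / (k + 1) * Real.log ((x i₀ / y i₀) / (x j₀ / y j₀)) :=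
        hilbertDist_mulVec_le_of_bounds hk hA hcross hy (div_pos (hx j₀) (hy j₀))
          (fun i => (le_div_iff₀ (hy i)).1 (hmin i)) (fun i => (div_le_iff₀ (hy i)).1 (hmax i))
    _ ≤ (k - 1) / (k + 1) * hilbertDist x y := by
        refine mul_le_mul_of_nonneg_left ?_ (div_nonneg (by linarith) (by linarith))
        rw [div_div_div_eq, mul_comm (y i₀)]
        exact log_div_le_hilbertDist hx hy i₀ j₀

theorem hilbertDist_mulVec_le_of_one_le_of_le [Nonempty (Fin d)]
    {A : Matrix (Fin d) (Fin d) ℝ} {N : ℝ} (h1 : ∀ i j, 1 ≤ A i j) (hN : ∀ i j, A i j ≤ N)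
    (hx : ∀ i, 0 < x i) (hy : ∀ i, 0 < y i) :
    hilbertDist (A *ᵥ x) (A *ᵥ y) ≤ (N - 1) / (N + 1) * hilbertDist x y := by
  obtain ⟨i⟩ := ‹Nonempty (Fin d)›
  have hN1 : 1 ≤ N := (h1 i i).trans (hN i i)
  refine hilbertDist_mulVec_le hN1 (fun i j => one_pos.trans_le (h1 i j)) (fun i i' j j' => ?_)
    hx hy
  calc A i j * A i' j' ≤ N ^ 2 := by
        rw [sq]; exact mul_le_mul (hN i j) (hN i' j') (by linarith [h1 i' j']) (by linarith)
    _ ≤ N ^ 2 * (A i j' * A i' j) :=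
        le_mul_of_one_le_right (by positivity)
          (one_le_mul_of_one_le_of_one_le (h1 i j') (h1 i' j))

end HilbertMetric

section Birkhoff

variable {d : ℕ}

theorem birkhoffCoeff_of_isEmpty [IsEmpty (Fin d)] (A : Matrix (Fin d) (Fin d) ℝ) :
    birkhoffCoeff A = 0 := by
  have hD : ∀ x y : Fin d → ℝ, hilbertDist x y = 0 := fun x y => by
    simp [hilbertDist, Real.iSup_of_isEmpty]
  simp [birkhoffCoeff, hD]

theorem birkhoffCoeff_nonneg [Nonempty (Fin d)] {A : Matrix (Fin d) (Fin d) ℝ}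
    (hA : ∀ x : Fin d → ℝ, (∀ i, 0 < x i) → ∀ i, 0 < (A *ᵥ x) i) : 0 ≤ birkhoffCoeff A :=
  Real.sSup_nonneg fun _ ⟨x, y, hx, hy, hD, ht⟩ =>
    ht ▸ div_nonneg (hilbertDist_nonneg (hA x hx) (hA y hy)) hD.le

theorem birkhoffCoeff_le {A : Matrix (Fin d) (Fin d) ℝ} {c : ℝ} (hc : 0 ≤ c)
    (h : ∀ x y : Fin d → ℝ, (∀ i, 0 < x i) → (∀ i, 0 < y i) →
      hilbertDist (A *ᵥ x) (A *ᵥ y) ≤ c * hilbertDist x y) :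
    birkhoffCoeff A ≤ c :=
  Real.sSup_le (fun _ ⟨x, y, hx, hy, hD, ht⟩ => ht ▸ (div_le_iff₀ hD).2 (h x y hx hy)) hc

end Birkhoff

section BackwardProduct

variable {d : ℕ} (F : ℕ → Matrix (Fin d) (Fin d) ℝ)

theorem revProd_self (m : ℕ) : revProd F m m = F m := by
  simp [revProd]

theorem revProd_succ {m n : ℕ} (h : m ≤ n + 1) :
    revProd F m (n + 1) = F (n + 1) * revProd F m n := by
  rw [revProd, show n + 1 + 1 - m = n + 1 - m + 1 by omega, List.range'_concat,
    show m + 1 * (n + 1 - m) = n + 1 by omega]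
  simp [revProd]

theorem revProd_mulVec_pos [Nonempty (Fin d)] (hF : ∀ n i j, 0 < F n i j) {m n : ℕ}
    (hmn : m ≤ n) {x : Fin d → ℝ} (hx : ∀ i, 0 < x i) : ∀ i, 0 < (revProd F m n *ᵥ x) i := by
  induction n, hmn using Nat.le_induction with
  | base => rw [revProd_self]; exact mulVec_pos (hF m) hx
  | succ n hmn ih => rw [revProd_succ F (by omega), ← mulVec_mulVec]; exact mulVec_pos (hF _) ih

theorem hilbertDist_revProd_mulVec_le [Nonempty (Fin d)] {N : ℕ → ℝ}
    (h1 : ∀ n i j, 1 ≤ F n i j) (hN : ∀ n i j, F n i j ≤ N n) {m n : ℕ} (hmn : m ≤ n)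
    {x y : Fin d → ℝ} (hx : ∀ i, 0 < x i) (hy : ∀ i, 0 < y i) :
    hilbertDist (revProd F m n *ᵥ x) (revProd F m n *ᵥ y)
      ≤ (∏ k ∈ Icc m n, (N k - 1) / (N k + 1)) * hilbertDist x y := by
  induction n, hmn using Nat.le_induction with
  | base =>
    rw [revProd_self, Icc_self, prod_singleton]
    exact hilbertDist_mulVec_le_of_one_le_of_le (h1 m) (hN m) hx hy
  | succ n hmn ih =>
    obtain ⟨i⟩ := ‹Nonempty (Fin d)›
    have hN1 : 1 ≤ N (n + 1) := (h1 _ i i).trans (hN _ i i)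
    have hpos : ∀ n i j, 0 < F n i j := fun n i j => one_pos.trans_le (h1 n i j)
    rw [revProd_succ F (by omega), ← mulVec_mulVec, ← mulVec_mulVec,
      prod_Icc_succ_top (by omega), mul_comm _ ((N (n + 1) - 1) / _), mul_assoc]
    calc _ ≤ (N (n + 1) - 1) / (N (n + 1) + 1)
          * hilbertDist (revProd F m n *ᵥ x) (revProd F m n *ᵥ y) :=
          hilbertDist_mulVec_le_of_one_le_of_le (h1 _) (hN _)
            (revProd_mulVec_pos F hpos hmn hx) (revProd_mulVec_pos F hpos hmn hy)
      _ ≤ _ := mul_le_mul_of_nonneg_left ih (div_nonneg (by linarith) (by linarith))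

end BackwardProduct

section Products

theorem tendsto_sum_Icc_atTop_of_not_summable {a : ℕ → ℝ} (ha : ∀ k, 0 ≤ a k)
    (h : ¬Summable a) (m : ℕ) : Tendsto (fun n => ∑ k ∈ Icc m n, a k) atTop atTop := by
  have hrange := ((not_summable_iff_tendsto_nat_atTop_of_nonneg ha).1 h).comp
    (tendsto_add_atTop_nat 1)
  refine (tendsto_atTop_add_const_right _ (-∑ k ∈ range m, a k) hrange).congr' ?_
  filter_upwards [eventually_ge_atTop m] with n hn
  rw [← Ico_add_one_right_eq_Icc, sum_Ico_eq_sub _ (by omega), Function.comp_apply,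
    sub_eq_add_neg]

theorem tendsto_prod_Icc_one_sub_of_not_summable {a : ℕ → ℝ} (ha0 : ∀ k, 0 ≤ a k)
    (ha1 : ∀ k, a k ≤ 1) (h : ¬Summable a) (m : ℕ) :
    Tendsto (fun n => ∏ k ∈ Icc m n, (1 - a k)) atTop (𝓝 0) := by
  refine squeeze_zero (fun n => prod_nonneg fun k _ => sub_nonneg.2 (ha1 k)) (fun n => ?_)
    (Real.tendsto_exp_atBot.comp
      (tendsto_neg_atTop_atBot.comp (tendsto_sum_Icc_atTop_of_not_summable ha0 h m)))
  calc ∏ k ∈ Icc m n, (1 - a k) ≤ ∏ k ∈ Icc m n, Real.exp (-a k) :=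
        prod_le_prod (fun k _ => sub_nonneg.2 (ha1 k)) fun k _ => Real.one_sub_le_exp_neg _
    _ = Real.exp (-∑ k ∈ Icc m n, a k) := by rw [← sum_neg_distrib, Real.exp_sum]

theorem not_summable_inv_add_one_of_le_mul {N : ℕ → ℝ} (hN : ∀ k, 0 ≤ N k) {C : ℝ}
    (hC : ∀ᶠ k in atTop, N k ≤ C * k) : ¬Summable fun k => (N k + 1)⁻¹ := by
  refine fun hs => Real.not_summable_natCast_inv
    (summable_of_isBigO_nat hs (Asymptotics.IsBigO.of_bound (C + 1) ?_))
  filter_upwards [hC, eventually_ge_atTop 1] with k hk hk1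
  have hk1' : (1 : ℝ) ≤ k := by exact_mod_cast hk1
  have hNk : 0 < N k + 1 := by linarith [hN k]
  rw [Real.norm_of_nonneg (by positivity), Real.norm_of_nonneg (by positivity),
    ← div_eq_mul_inv, le_div_iff₀ hNk, inv_mul_le_iff₀ (by positivity)]
  linarith

theorem tendsto_prod_Icc_sub_one_div_add_one {N : ℕ → ℝ} (hN : ∀ k, 1 ≤ N k) {C : ℝ}
    (hC : ∀ᶠ k in atTop, N k ≤ C * k) (m : ℕ) :
    Tendsto (fun n => ∏ k ∈ Icc m n, (N k - 1) / (N k + 1)) atTop (𝓝 0) := by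
  have hNk : ∀ k, 2 ≤ N k + 1 := fun k => by linarith [hN k]
  have hfactor : ∀ k, (N k - 1) / (N k + 1) = 1 - 2 * (N k + 1)⁻¹ := fun k => by
    field_simp [(zero_lt_two.trans_le (hNk k)).ne']
    ring
  simp only [hfactor]
  refine tendsto_prod_Icc_one_sub_of_not_summable
    (fun k => mul_nonneg zero_le_two (inv_nonneg.2 (zero_le_two.trans (hNk k))))
    (fun k => ?_) ?_ m
  · rw [← div_eq_mul_inv, div_le_one (zero_lt_two.trans_le (hNk k))]
    exact hNk k
  · rw [summable_mul_left_iff two_ne_zero]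
    exact not_summable_inv_add_one_of_le_mul (fun k => zero_le_one.trans (hN k)) hC

end Products

theorem le_norm1 {d : ℕ} (A : Matrix (Fin d) (Fin d) ℝ) (i j : Fin d) : A i j ≤ norm1 A :=
  (le_abs_self _).trans <|
    (single_le_sum (f := fun j => |A i j|) (fun _ _ => abs_nonneg _) (mem_univ j)).trans <|
      single_le_sum (f := fun i => ∑ j, |A i j|) (fun _ _ => sum_nonneg fun _ _ => abs_nonneg _)
        (mem_univ i)

theorem stmt8_general {d : ℕ} (F : ℕ → Matrix (Fin d) (Fin d) ℝ)
    (hF : ∀ n i j, 1 ≤ F n i j) (C : ℝ)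
    (hnorm : ∀ᶠ n in atTop, norm1 (F n) ≤ C * n) :
    ∀ m, Tendsto (fun n => birkhoffCoeff (revProd F m n)) atTop (nhds 0) := by
  intro m
  cases isEmpty_or_nonempty (Fin d)
  · simpa only [birkhoffCoeff_of_isEmpty] using tendsto_const_nhds
  obtain ⟨i⟩ := ‹Nonempty (Fin d)›
  have hN : ∀ n, 1 ≤ norm1 (F n) := fun n => (hF n i i).trans (le_norm1 _ i i)
  have hpos : ∀ n i j, 0 < F n i j := fun n i j => one_pos.trans_le (hF n i j)
  refine squeeze_zero' ?_ ?_ (tendsto_prod_Icc_sub_one_div_add_one hN hnorm m)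
  · filter_upwards [eventually_ge_atTop m] with n hn
    exact birkhoffCoeff_nonneg fun x hx => revProd_mulVec_pos F hpos hn hx
  · filter_upwards [eventually_ge_atTop m] with n hn
    exact birkhoffCoeff_le
      (prod_nonneg fun k _ => div_nonneg (by linarith [hN k]) (by linarith [hN k]))
      fun x y hx hy => hilbertDist_revProd_mulVec_le F hF (fun n => le_norm1 (F n)) hn hx hy

/-- If all entries of each `F_n` are `≥ 1` and `‖F_n‖₁ ≤ C·n`
for all sufficiently large `n`, then `τ(F_n F_{n-1} ⋯ F_m) → 0` for every `m`. -/
theorem stmt8 {d : ℕ} (F : ℕ → Matrix (Fin d) (Fin d) ℝ)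
    (hF : ∀ n i j, 1 ≤ F n i j) (C : ℝ) (hC : 0 < C)
    (hnorm : ∀ᶠ n in atTop, norm1 (F n) ≤ C * n) :
    ∀ m, Tendsto (fun n => birkhoffCoeff (revProd F m n)) atTop (nhds 0) :=
  stmt8_general F hF C hnorm
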